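/- arXiv:1209.5851 — 2 statements merged into one kernel-verified Lean document; each statement's English description precedes it below -/
import Mathlib

section
/- Let R be a relation on a type of programs and let depth : step → ℕ assign a depth to each reduction step. Suppose the swapping property holds: whenever P →_i P₁ →_j P₂ with i > j, there exists P' with P →_j P' →_i P₂. Then for any reduction sequence P₁ →* P_n there exists a reduction sequence P₁ →* P_n of the same length whose step depths are non-decreasing. -/
/-!
Record a reduction sequence by its list of step depths. Insertion sort on that list only ever
moves a step past an adjacent shallower one, which is exactly what the swapping property
allows; so sorting the depths can be mirrored by a reduction sequence with the same endpoints.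
-/

theorem List.SortedLE.getD_le_getD {β : Type*} [Preorder β] {l : List β} (hl : l.SortedLE)
    {m m' : ℕ} (hmm' : m ≤ m') (hm' : m' < l.length) (d : β) : l.getD m d ≤ l.getD m' d := by
  rw [List.getD_eq_getElem _ _ (by omega), List.getD_eq_getElem _ _ hm']
  exact hl.getElem_le_getElem_of_le hmm'

section

variable {α : Type*}

def SwapsOutOfOrderSteps (Step : ℕ → α → α → Prop) : Prop :=
  ∀ i j P P₁ P₂, j < i → Step i P P₁ → Step j P₁ P₂ → ∃ P', Step j P P' ∧ Step i P' P₂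

inductive Reduces (Step : ℕ → α → α → Prop) : α → List ℕ → α → Prop
  | nil (a : α) : Reduces Step a [] a
  | cons {a b c : α} {d : ℕ} {l : List ℕ} :
      Step d a b → Reduces Step b l c → Reduces Step a (d :: l) c

namespace Reduces

variable {Step : ℕ → α → α → Prop}

theorem of_seq {s : ℕ → α} {dep : ℕ → ℕ} {n : ℕ}
    (h : ∀ m < n, Step (dep m) (s m) (s (m + 1))) :
    Reduces Step (s 0) ((List.range n).map dep) (s n) := by
  induction n generalizing s dep with
  | zero => exact nil _
  | succ n ih =>
    rw [List.range_succ_eq_map, List.map_cons, List.map_map]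
    exact cons (h 0 n.succ_pos) (ih (s := (s ·.succ)) fun m hm => h (m + 1) (by omega))

theorem exists_seq {a b : α} {l : List ℕ} (h : Reduces Step a l b) :
    ∃ s : ℕ → α, s 0 = a ∧ s l.length = b ∧
      ∀ m < l.length, Step (l.getD m 0) (s m) (s (m + 1)) := by
  induction h with
  | nil a => exact ⟨fun _ => a, rfl, rfl, by simp⟩
  | @cons a _ _ _ _ hd _ ih =>
    obtain ⟨s, rfl, rfl, hs⟩ := ih
    refine ⟨fun | 0 => a | m + 1 => s m, rfl, rfl, ?_⟩
    rintro (_ | m) hm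
    · exact hd
    · exact hs m (by simpa using hm)

theorem orderedInsert (hswap : SwapsOutOfOrderSteps Step) {a b c : α} {d : ℕ} {l : List ℕ}
    (hd : Step d a b) (h : Reduces Step b l c) :
    Reduces Step a (l.orderedInsert (· ≤ ·) d) c := by
  induction h generalizing a with
  | nil => exact cons hd (nil _)
  | @cons _ _ _ e _ he hl ih =>
    by_cases hde : d ≤ e
    · rw [List.orderedInsert_cons_of_le _ _ hde]
      exact cons hd (cons he hl)
    · rw [List.orderedInsert_of_not_le _ _ hde]
      obtain ⟨a', he', hd'⟩ := hswap _ _ _ _ _ (not_le.mp hde) hd he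
      exact cons he' (ih hd')

theorem insertionSort (hswap : SwapsOutOfOrderSteps Step) {a b : α} {l : List ℕ}
    (h : Reduces Step a l b) : Reduces Step a (l.insertionSort (· ≤ ·)) b := by
  induction h with
  | nil a => exact nil a
  | cons hd _ ih => exact orderedInsert hswap hd ih

end Reduces

end

/-- Abstract simulation by shallow-first: if adjacent out-of-order steps can be
swapped, any reduction sequence can be reordered into one of the same length,
with the same endpoints, whose step depths are non-decreasing. -/
theorem simulation_by_shallow_first {α : Type*} (Step : ℕ → α → α → Prop)
    (hswap : ∀ i j P P₁ P₂, j < i → Step i P P₁ → Step j P₁ P₂ →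
      ∃ P', Step j P P' ∧ Step i P' P₂)
    (n : ℕ) (s : ℕ → α) (dep : ℕ → ℕ)
    (h : ∀ m < n, Step (dep m) (s m) (s (m + 1))) :
    ∃ (s' : ℕ → α) (dep' : ℕ → ℕ),
      s' 0 = s 0 ∧ s' n = s n ∧
      (∀ m < n, Step (dep' m) (s' m) (s' (m + 1))) ∧
      (∀ m m', m ≤ m' → m' < n → dep' m ≤ dep' m') := by
  set l := ((List.range n).map dep).insertionSort (· ≤ ·)
  have hl : Reduces Step (s 0) l (s n) := (Reduces.of_seq h).insertionSort hswap
  have hlen : l.length = n := by simp [l, List.length_insertionSort]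
  obtain ⟨s', h0, hn, hs⟩ := hl.exists_seq
  rw [hlen] at hn hs
  exact ⟨s', (l.getD · 0), h0, hn, hs, fun m m' hmm' hm' =>
    List.sortedLE_insertionSort.getD_le_getD hmm' (hlen.symm ▸ hm') 0⟩
end

section
/- In the pure lambda calculus, define Z = λx. let !x = x in !(x x), interpreting 'let !x = N in M' with the reduction (let !x = !N in M) → M[N/x]. Then the term Z(Z(...(Z !y)...)) with n occurrences of Z reduces to !(y y ⋯ y) with 2^n occurrences of y; in particular the size of the normal form is exponential in n. -/
/-!
`Z !M` β-reduces to `let !x = !M in !(x x)`, which the `(!)` rule turns into `!(M M)`: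
the duplicated argument is the whole term under the bang, so each `Z` doubles it.
Iterating from `!y` gives `!(y y ⋯ y)` with `2 ^ n` occurrences of `y`, and the size of a
term bounds the number of free occurrences of any variable in it.
-/

set_option maxHeartbeats 1000000

/-- Terms of the modal λ-calculus with multithreading and regions. -/
inductive Tm : Type
  | var : ℕ → Tm
  | reg : ℕ → Tm
  | unit : Tm
  | lam : ℕ → Tm → Tm
  | app : Tm → Tm → Tm
  | bang : Tm → Tm
  | para : Tm → Tm
  | letB : ℕ → Tm → Tm → Tm
  | letP : ℕ → Tm → Tm → Tm
  | get : ℕ → Tm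
  | setr : ℕ → Tm → Tm
  | store : ℕ → Tm → Tm
  | par : Tm → Tm → Tm
  deriving DecidableEq

namespace Tm

/-- Substitution of `N` for the free occurrences of variable `x`. -/
def subst (N : Tm) (x : ℕ) : Tm → Tm
  | var y => if y = x then N else var y
  | reg r => reg r
  | unit => unit
  | lam y M => if y = x then lam y M else lam y (subst N x M)
  | app M M' => app (subst N x M) (subst N x M')
  | bang M => bang (subst N x M)
  | para M => para (subst N x M)
  | letB y M M' => letB y (subst N x M) (if y = x then M' else subst N x M')
  | letP y M M' => letP y (subst N x M) (if y = x then M' else subst N x M')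
  | get r => get r
  | setr r M => setr r (subst N x M)
  | store r M => store r (subst N x M)
  | par M M' => par (subst N x M) (subst N x M')

/-- Number of free occurrences of variable `x`. -/
def fo (x : ℕ) : Tm → ℕ
  | var y => if y = x then 1 else 0
  | reg _ => 0
  | unit => 0
  | lam y M => if y = x then 0 else fo x M
  | app M N => fo x M + fo x N
  | bang M => fo x M
  | para M => fo x M
  | letB y M N => fo x M + (if y = x then 0 else fo x N)
  | letP y M N => fo x M + (if y = x then 0 else fo x N)
  | get _ => 0
  | setr _ M => fo x M
  | store _ M => fo x M
  | par M N => fo x M + fo x N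

/-- Total number of free variable occurrences. -/
def foa : Tm → ℕ
  | var _ => 1
  | reg _ => 0
  | unit => 0
  | lam y M => foa M - fo y M
  | app M N => foa M + foa N
  | bang M => foa M
  | para M => foa M
  | letB y M N => foa M + (foa N - fo y N)
  | letP y M N => foa M + (foa N - fo y N)
  | get _ => 0
  | setr _ M => foa M
  | store _ M => foa M
  | par M N => foa M + foa N

def closed (M : Tm) : Prop := ∀ x, fo x M = 0

/-- Region contexts: each region is assigned a depth. -/
abbrev RCtx := ℕ → ℕ

/-- Revised depth of a program: number of modal (`!`/`§`) labels above an
occurrence, plus `R r` for occurrences under a store `r ⇐ ·`. -/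
def depth (R : RCtx) : Tm → ℕ
  | var _ => 0
  | reg _ => 0
  | unit => 0
  | lam _ M => depth R M
  | app M N => max (depth R M) (depth R N)
  | bang M => depth R M + 1
  | para M => depth R M + 1
  | letB _ M N => max (depth R M) (depth R N)
  | letP _ M N => max (depth R M) (depth R N)
  | get _ => 0
  | setr _ M => depth R M
  | store r M => R r + depth R M
  | par M N => max (depth R M) (depth R N)

/-- Size (number of occurrences), with the convention that `∥` and `r⇐`
nodes do not count and `set(r)` counts for two occurrences. -/
def sizeM : Tm → ℕ
  | var _ => 1
  | reg _ => 1
  | unit => 1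
  | lam _ M => sizeM M + 1
  | app M N => sizeM M + sizeM N + 1
  | bang M => sizeM M + 1
  | para M => sizeM M + 1
  | letB _ M N => sizeM M + sizeM N + 1
  | letP _ M N => sizeM M + sizeM N + 1
  | get _ => 1
  | setr _ M => sizeM M + 2
  | store _ M => sizeM M
  | par M N => sizeM M + sizeM N

end Tm

/-- Usages of variables in the polynomial depth system. -/
inductive Usage : Type
  | ulam | upara | ubang
  deriving DecidableEq

/-- Variable contexts of the depth system. -/
abbrev VCtx := ℕ → Option Usage

open Tm in
/-- The polynomial depth system : `WF R Γ δ P` is the judgement `R; Γ ⊢^δ P`. -/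
inductive WF : Tm.RCtx → VCtx → ℕ → Tm → Prop
  | var {R : Tm.RCtx} {Γ : VCtx} {δ x} : Γ x = some .ulam → WF R Γ δ (.var x)
  | reg {R : Tm.RCtx} {Γ : VCtx} {δ r} : WF R Γ δ (.reg r)
  | unit {R : Tm.RCtx} {Γ : VCtx} {δ} : WF R Γ δ .unit
  | lam {R : Tm.RCtx} {Γ : VCtx} {δ x M} : Tm.fo x M = 1 →
      WF R (Function.update Γ x (some .ulam)) δ M → WF R Γ δ (.lam x M)
  | app {R : Tm.RCtx} {Γ : VCtx} {δ M N} :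
      WF R Γ δ M → WF R Γ δ N → WF R Γ δ (.app M N)
  | bang {R : Tm.RCtx} {Γ Γ' : VCtx} {δ M} : Tm.foa M ≤ 1 →
      (∀ x, Γ' x = none ∨ Γ' x = some .ulam) →
      (∀ x, Γ' x = some .ulam → Γ x = some .ubang) →
      WF R Γ' (δ + 1) M → WF R Γ δ (.bang M)
  | para {R : Tm.RCtx} {Γ Γ' : VCtx} {δ M} :
      (∀ x, Γ' x = none ∨ Γ' x = some .ulam) →
      (∀ x, Γ' x = some .ulam → Γ x = some .ubang ∨ Γ x = some .upara) →
      WF R Γ' (δ + 1) M → WF R Γ δ (.para M)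
  | letB {R : Tm.RCtx} {Γ : VCtx} {δ x M N} : 1 ≤ Tm.fo x N →
      WF R Γ δ M → WF R (Function.update Γ x (some .ubang)) δ N →
      WF R Γ δ (.letB x M N)
  | letP {R : Tm.RCtx} {Γ : VCtx} {δ x M N} : Tm.fo x N = 1 →
      WF R Γ δ M → WF R (Function.update Γ x (some .upara)) δ N →
      WF R Γ δ (.letP x M N)
  | get {R : Tm.RCtx} {Γ : VCtx} {δ r} : R r = δ → WF R Γ δ (.get r)
  | setr {R : Tm.RCtx} {Γ : VCtx} {δ r M} : R r = δ → WF R Γ δ M →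
      WF R Γ δ (.setr r M)
  | store {R : Tm.RCtx} {Γ : VCtx} {r M} : WF R Γ (R r) M → WF R Γ 0 (.store r M)
  | par {R : Tm.RCtx} {Γ : VCtx} {δ P Q} :
      WF R Γ δ P → WF R Γ δ Q → WF R Γ δ (.par P Q)

/-- One-hole evaluation contexts `E`. -/
inductive Ctx : Type
  | hole : Ctx
  | lam : ℕ → Ctx → Ctx
  | appL : Ctx → Tm → Ctx
  | appR : Tm → Ctx → Ctx
  | bang : Ctx → Ctx
  | para : Ctx → Ctx
  | letBL : ℕ → Ctx → Tm → Ctx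
  | letBR : ℕ → Tm → Ctx → Ctx
  | letPL : ℕ → Ctx → Tm → Ctx
  | letPR : ℕ → Tm → Ctx → Ctx
  | setr : ℕ → Ctx → Ctx
  | store : ℕ → Ctx → Ctx
  | parL : Ctx → Tm → Ctx
  | parR : Tm → Ctx → Ctx

namespace Ctx

def fill : Ctx → Tm → Tm
  | hole, M => M
  | lam x E, M => .lam x (fill E M)
  | appL E N, M => .app (fill E M) N
  | appR N E, M => .app N (fill E M)
  | bang E, M => .bang (fill E M)
  | para E, M => .para (fill E M)
  | letBL x E N, M => .letB x (fill E M) N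
  | letBR x N E, M => .letB x N (fill E M)
  | letPL x E N, M => .letP x (fill E M) N
  | letPR x N E, M => .letP x N (fill E M)
  | setr r E, M => .setr r (fill E M)
  | store r E, M => .store r (fill E M)
  | parL E N, M => .par (fill E M) N
  | parR N E, M => .par N (fill E M)

/-- Depth of the hole of a context. -/
def hdepth (R : Tm.RCtx) : Ctx → ℕ
  | hole => 0
  | lam _ E => hdepth R E
  | appL E _ => hdepth R E
  | appR _ E => hdepth R E
  | bang E => hdepth R E + 1
  | para E => hdepth R E + 1
  | letBL _ E _ => hdepth R E
  | letBR _ _ E => hdepth R E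
  | letPL _ E _ => hdepth R E
  | letPR _ _ E => hdepth R E
  | setr _ E => hdepth R E
  | store r E => R r + hdepth R E
  | parL E _ => hdepth R E
  | parR _ E => hdepth R E

/-- Outer-bang contexts: contexts not decomposable as `E[!E']`. -/
def isOB : Ctx → Prop
  | hole => True
  | lam _ E => isOB E
  | appL E _ => isOB E
  | appR _ E => isOB E
  | bang _ => False
  | para E => isOB E
  | letBL _ E _ => isOB E
  | letBR _ _ E => isOB E
  | letPL _ E _ => isOB E
  | letPR _ _ E => isOB E
  | setr _ E => isOB E
  | store _ E => isOB E
  | parL E _ => isOB E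
  | parR _ E => isOB E

end Ctx

/-- Structural equivalence: commutativity/associativity of `∥`, closed
under arbitrary contexts. -/
inductive SEq : Tm → Tm → Prop
  | refl (M : Tm) : SEq M M
  | symm {P Q} : SEq P Q → SEq Q P
  | trans {P Q S} : SEq P Q → SEq Q S → SEq P S
  | comm (P Q : Tm) : SEq (.par P Q) (.par Q P)
  | assoc (P Q S : Tm) : SEq (.par (.par P Q) S) (.par P (.par Q S))
  | ctx (E : Ctx) {P Q} : SEq P Q → SEq (E.fill P) (E.fill Q)

open Ctx in
/-- Reduction rules, indexed by the depth `i` at which the redex occurs. -/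
inductive RedAt (R : Tm.RCtx) : ℕ → Tm → Tm → Prop
  | beta (E : Ctx) (x : ℕ) (M N : Tm) :
      RedAt R (E.hdepth R) (E.fill (.app (.lam x M) N)) (E.fill (Tm.subst N x M))
  | lbang (E : Ctx) (x : ℕ) (M N : Tm) :
      RedAt R (E.hdepth R) (E.fill (.letB x (.bang N) M)) (E.fill (Tm.subst N x M))
  | lpara (E : Ctx) (x : ℕ) (M N : Tm) :
      RedAt R (E.hdepth R) (E.fill (.letP x (.para N) M)) (E.fill (Tm.subst N x M))
  | get (E : Ctx) (r : ℕ) (M : Tm) :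
      RedAt R (E.hdepth R) (.par (E.fill (.get r)) (.store r M)) (E.fill M)
  | setr (E : Ctx) (r : ℕ) (M : Tm) : M.closed →
      RedAt R (E.hdepth R) (E.fill (.setr r M)) (.par (E.fill .unit) (.store r M))
  | gc (E : Ctx) (M : Tm) :
      RedAt R (E.hdepth R) (E.fill (.par .unit M)) (E.fill M)

/-- A reduction step at depth `i`, modulo structural equivalence. -/
def StepAt (R : Tm.RCtx) (i : ℕ) (P Q : Tm) : Prop :=
  ∃ P' Q', SEq P P' ∧ RedAt R i P' Q' ∧ SEq Q' Q

/-- A reduction step of the largest reduction relation `⟶`. -/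
def Step (P Q : Tm) : Prop := ∃ i, StepAt (fun _ => 0) i P Q

open Ctx in
/-- Outer-bang reduction rules, indexed by depth. -/
inductive RedFAt (R : Tm.RCtx) : ℕ → Tm → Tm → Prop
  | beta (E : Ctx) (x : ℕ) (M N : Tm) : E.isOB →
      RedFAt R (E.hdepth R) (E.fill (.app (.lam x M) N)) (E.fill (Tm.subst N x M))
  | lbang (E : Ctx) (x : ℕ) (M N : Tm) : E.isOB →
      RedFAt R (E.hdepth R) (E.fill (.letB x (.bang N) M)) (E.fill (Tm.subst N x M))
  | lpara (E : Ctx) (x : ℕ) (M N : Tm) : E.isOB →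
      RedFAt R (E.hdepth R) (E.fill (.letP x (.para N) M)) (E.fill (Tm.subst N x M))
  | get (E : Ctx) (r : ℕ) (M : Tm) : E.isOB →
      RedFAt R (E.hdepth R) (.par (E.fill (.get r)) (.store r M)) (E.fill M)
  | setr (E : Ctx) (r : ℕ) (M : Tm) : E.isOB → M.closed →
      RedFAt R (E.hdepth R) (E.fill (.setr r M)) (.par (E.fill .unit) (.store r M))
  | gc (E : Ctx) (M : Tm) : E.isOB →
      RedFAt R (E.hdepth R) (E.fill (.par .unit M)) (E.fill M)

/-- An outer-bang reduction step at depth `i`, modulo structural equivalence. -/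
def StepFAt (R : Tm.RCtx) (i : ℕ) (P Q : Tm) : Prop :=
  ∃ P' Q', SEq P P' ∧ RedFAt R i P' Q' ∧ SEq Q' Q

/-- Values of the call-by-value calculus. -/
inductive IsVal : Tm → Prop
  | var (x : ℕ) : IsVal (.var x)
  | reg (r : ℕ) : IsVal (.reg r)
  | unit : IsVal .unit
  | lam (x : ℕ) (M : Tm) : IsVal (.lam x M)
  | bang {V} : IsVal V → IsVal (.bang V)
  | para {V} : IsVal V → IsVal (.para V)

/-- Call-by-value programs: `!M` only on values, stores hold values. -/
inductive CbvTm : Tm → Prop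
  | var (x : ℕ) : CbvTm (.var x)
  | reg (r : ℕ) : CbvTm (.reg r)
  | unit : CbvTm .unit
  | lam {x M} : CbvTm M → CbvTm (.lam x M)
  | app {M N} : CbvTm M → CbvTm N → CbvTm (.app M N)
  | bang {M} : IsVal M → CbvTm M → CbvTm (.bang M)
  | para {M} : CbvTm M → CbvTm (.para M)
  | letB {x M N} : CbvTm M → CbvTm N → CbvTm (.letB x M N)
  | letP {x M N} : CbvTm M → CbvTm N → CbvTm (.letP x M N)
  | get (r : ℕ) : CbvTm (.get r)
  | setr {r M} : CbvTm M → CbvTm (.setr r M)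
  | store {r M} : IsVal M → CbvTm M → CbvTm (.store r M)
  | par {P Q} : CbvTm P → CbvTm Q → CbvTm (.par P Q)

/-- Left-to-right call-by-value evaluation contexts `F_v`. -/
inductive CbvCtx : Ctx → Prop
  | hole : CbvCtx .hole
  | appL {E} (M : Tm) : CbvCtx E → CbvCtx (.appL E M)
  | appR {V E} : IsVal V → CbvCtx E → CbvCtx (.appR V E)
  | para {E} : CbvCtx E → CbvCtx (.para E)
  | letBL {E} (x : ℕ) (M : Tm) : CbvCtx E → CbvCtx (.letBL x E M)
  | letPL {E} (x : ℕ) (M : Tm) : CbvCtx E → CbvCtx (.letPL x E M)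
  | setr {E} (r : ℕ) : CbvCtx E → CbvCtx (.setr r E)
  | parL {E} (P : Tm) : CbvCtx E → CbvCtx (.parL E P)
  | parR {E} (P : Tm) : CbvCtx E → CbvCtx (.parR P E)

open Ctx in
/-- Call-by-value reduction rules. -/
inductive CbvRed : Tm → Tm → Prop
  | beta {E : Ctx} (x : ℕ) (M : Tm) {V : Tm} : CbvCtx E → IsVal V →
      CbvRed (E.fill (.app (.lam x M) V)) (E.fill (Tm.subst V x M))
  | lbang {E : Ctx} (x : ℕ) (M : Tm) {V : Tm} : CbvCtx E → IsVal V →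
      CbvRed (E.fill (.letB x (.bang V) M)) (E.fill (Tm.subst V x M))
  | lpara {E : Ctx} (x : ℕ) (M : Tm) {V : Tm} : CbvCtx E → IsVal V →
      CbvRed (E.fill (.letP x (.para V) M)) (E.fill (Tm.subst V x M))
  | get {E : Ctx} (r : ℕ) {V : Tm} : CbvCtx E → IsVal V →
      CbvRed (.par (E.fill (.get r)) (.store r V)) (E.fill V)
  | setr {E : Ctx} (r : ℕ) {V : Tm} : CbvCtx E → IsVal V →
      CbvRed (E.fill (.setr r V)) (.par (E.fill .unit) (.store r V))
  | gc {E : Ctx} (M : Tm) : CbvCtx E →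
      CbvRed (E.fill (.par .unit M)) (E.fill M)

/-- A call-by-value reduction step, modulo structural equivalence. -/
def CbvStep (P Q : Tm) : Prop :=
  ∃ P' Q', SEq P P' ∧ CbvRed P' Q' ∧ SEq Q' Q

/-- `rep M k` is the iterated application `M M ⋯ M` (`k` copies, `k ≥ 1`). -/
def rep (M : Tm) : ℕ → Tm
  | 0 => M
  | 1 => M
  | (k + 2) => .app (rep M (k + 1)) M

/-- The unfolding `⟨P⟩ᵢ` of a program `P` at depth `i`. -/
def unfold : ℕ → Tm → Tm
  | _, .var x => .var x
  | _, .reg r => .reg r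
  | _, .unit => .unit
  | i, .lam x M => .lam x (unfold i M)
  | i, .app M N => .app (unfold i M) (unfold i N)
  | 0, .bang M => .bang M
  | (i + 1), .bang M => .bang (unfold i M)
  | 0, .para M => .para M
  | (i + 1), .para M => .para (unfold i M)
  | 0, .letB x (.bang M') N =>
      .letB x (rep (.bang M') (Tm.fo x (unfold 0 N))) (unfold 0 N)
  | 0, .letB x (.var y) N => .letB x (.var y) (unfold 0 N)
  | 0, .letB x (.reg r) N => .letB x (.reg r) (unfold 0 N)
  | 0, .letB x .unit N => .letB x .unit (unfold 0 N)
  | 0, .letB x (.lam y M) N => .letB x (unfold 0 (Tm.lam y M)) (unfold 0 N)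
  | 0, .letB x (.app M M') N => .letB x (unfold 0 (Tm.app M M')) (unfold 0 N)
  | 0, .letB x (.para M) N => .letB x (unfold 0 (Tm.para M)) (unfold 0 N)
  | 0, .letB x (.letB y M M') N => .letB x (unfold 0 (Tm.letB y M M')) (unfold 0 N)
  | 0, .letB x (.letP y M M') N => .letB x (unfold 0 (Tm.letP y M M')) (unfold 0 N)
  | 0, .letB x (.get r) N => .letB x (.get r) (unfold 0 N)
  | 0, .letB x (.setr r M) N => .letB x (unfold 0 (Tm.setr r M)) (unfold 0 N)
  | 0, .letB x (.store r M) N => .letB x (unfold 0 (Tm.store r M)) (unfold 0 N)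
  | 0, .letB x (.par M M') N => .letB x (unfold 0 (Tm.par M M')) (unfold 0 N)
  | (i + 1), .letB x M N => .letB x (unfold (i + 1) M) (unfold (i + 1) N)
  | i, .letP x M N => .letP x (unfold i M) (unfold i N)
  | _, .get r => .get r
  | i, .setr r M => .setr r (unfold i M)
  | i, .store r M => .store r (unfold i M)
  | i, .par P Q => .par (unfold i P) (unfold i Q)

/-- Types of the polynomial type system. -/
inductive Ty : Type
  | tvar : ℕ → Ty
  | beh : Ty
  | unit : Ty
  | arr : Ty → Ty → Ty
  | bang : Ty → Ty
  | para : Ty → Ty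
  | all : ℕ → Ty → Ty
  | regT : ℕ → Ty → Ty
  deriving DecidableEq

/-- Free occurrence of a type variable in a type. -/
def occursT (t : ℕ) : Ty → Prop
  | .tvar s => s = t
  | .beh => False
  | .unit => False
  | .arr A α => occursT t A ∨ occursT t α
  | .bang A => occursT t A
  | .para A => occursT t A
  | .all s A => s ≠ t ∧ occursT t A
  | .regT _ A => occursT t A

/-- Substitution of type `B` for type variable `t`. -/
def tsubst (B : Ty) (t : ℕ) : Ty → Ty
  | .tvar s => if s = t then B else .tvar s
  | .beh => .beh
  | .unit => .unit
  | .arr A α => .arr (tsubst B t A) (tsubst B t α)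
  | .bang A => .bang (tsubst B t A)
  | .para A => .para (tsubst B t A)
  | .all s A => if s = t then .all s A else .all s (tsubst B t A)
  | .regT r A => .regT r (tsubst B t A)

/-- Typed region contexts: each region gets a depth and a type. -/
abbrev TRCtx := ℕ → ℕ × Ty

/-- Compatibility `R ↓ α` of a region context and a type. -/
inductive TyDown (RT : TRCtx) : Ty → Prop
  | tvar (t : ℕ) : TyDown RT (.tvar t)
  | beh : TyDown RT .beh
  | unit : TyDown RT .unit
  | arr {A α} : TyDown RT A → TyDown RT α → TyDown RT (.arr A α)
  | bang {A} : TyDown RT A → TyDown RT (.bang A)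
  | para {A} : TyDown RT A → TyDown RT (.para A)
  | all {t A} : TyDown RT A → (∀ r, ¬ occursT t (RT r).2) → TyDown RT (.all t A)
  | regT (r : ℕ) : TyDown RT (.regT r (RT r).2)

/-- Well-formedness `R ⊢ α` of a type in a region context. -/
def TyWF (RT : TRCtx) (α : Ty) : Prop :=
  (∀ r, TyDown RT (RT r).2) ∧ TyDown RT α

/-- Typed variable contexts. -/
abbrev TCtx := ℕ → Option (Usage × Ty)

/-- Well-formedness `R ⊢ Γ` of a variable context. -/
def CtxTyWF (RT : TRCtx) (Γ : TCtx) : Prop :=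
  (∀ r, TyDown RT (RT r).2) ∧ ∀ x u A, Γ x = some (u, A) → TyDown RT A

/-- Stores: parallel compositions of assignments. -/
inductive IsStore : Tm → Prop
  | store (r : ℕ) (M : Tm) : IsStore (.store r M)
  | par {S S'} : IsStore S → IsStore S' → IsStore (.par S S')

/-- The polynomial type system: `Typed RT Γ δ P α` is `R; Γ ⊢^δ P : α`. -/
inductive Typed (RT : TRCtx) : TCtx → ℕ → Tm → Ty → Prop
  | var {Γ δ x A} : CtxTyWF RT Γ → Γ x = some (.ulam, A) → Typed RT Γ δ (.var x) A
  | unit {Γ δ} : CtxTyWF RT Γ → Typed RT Γ δ .unit .unit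
  | reg {Γ δ r} : CtxTyWF RT Γ → Typed RT Γ δ (.reg r) (.regT r (RT r).2)
  | lam {Γ δ x M A α} : Tm.fo x M = 1 →
      Typed RT (Function.update Γ x (some (.ulam, A))) δ M α →
      Typed RT Γ δ (.lam x M) (.arr A α)
  | app {Γ δ M N A α} : Typed RT Γ δ M (.arr A α) → Typed RT Γ δ N A →
      Typed RT Γ δ (.app M N) α
  | bang {Γ Γ' δ M A} : Tm.foa M ≤ 1 →
      (∀ x, Γ' x = none ∨ ∃ B, Γ' x = some (.ulam, B)) →
      (∀ x B, Γ' x = some (Usage.ulam, B) → Γ x = some (.ubang, B)) →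
      Typed RT Γ' (δ + 1) M A → Typed RT Γ δ (.bang M) (.bang A)
  | para {Γ Γ' δ M A} :
      (∀ x, Γ' x = none ∨ ∃ B, Γ' x = some (.ulam, B)) →
      (∀ x B, Γ' x = some (Usage.ulam, B) →
        Γ x = some (.ubang, B) ∨ Γ x = some (.upara, B)) →
      Typed RT Γ' (δ + 1) M A → Typed RT Γ δ (.para M) (.para A)
  | letB {Γ δ x M N A α} : 1 ≤ Tm.fo x N →
      Typed RT Γ δ M (.bang A) →
      Typed RT (Function.update Γ x (some (.ubang, A))) δ N α →
      Typed RT Γ δ (.letB x M N) α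
  | letP {Γ δ x M N A α} : Tm.fo x N = 1 →
      Typed RT Γ δ M (.para A) →
      Typed RT (Function.update Γ x (some (.upara, A))) δ N α →
      Typed RT Γ δ (.letP x M N) α
  | gen {Γ δ M t A} :
      (∀ r, ¬ occursT t (RT r).2) →
      (∀ x u A', Γ x = some (u, A') → ¬ occursT t A') →
      Typed RT Γ δ M A → Typed RT Γ δ M (.all t A)
  | inst {Γ δ M t A B} : Typed RT Γ δ M (.all t A) → TyDown RT B →
      Typed RT Γ δ M (tsubst B t A)
  | get {Γ δ r} : CtxTyWF RT Γ → (RT r).1 = δ → Typed RT Γ δ (.get r) (RT r).2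
  | setr {Γ δ r M} : (RT r).1 = δ → Typed RT Γ δ M (RT r).2 →
      Typed RT Γ δ (.setr r M) .unit
  | store {Γ r M} : Typed RT Γ (RT r).1 M (RT r).2 → Typed RT Γ 0 (.store r M) .beh
  | parLunit {Γ δ P₁ P₂ α} : Typed RT Γ δ P₁ .unit →
      Typed RT Γ δ P₂ α → Typed RT Γ δ (.par P₁ P₂) α
  | parLstore {Γ δ P₁ P₂ α} : IsStore P₁ →
      Typed RT Γ δ P₂ α → Typed RT Γ δ (.par P₁ P₂) α
  | parRunit {Γ δ P₁ P₂ α} : Typed RT Γ δ P₂ .unit →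
      Typed RT Γ δ P₁ α → Typed RT Γ δ (.par P₁ P₂) α
  | parRstore {Γ δ P₁ P₂ α} : IsStore P₂ →
      Typed RT Γ δ P₁ α → Typed RT Γ δ (.par P₁ P₂) α
  | parB {Γ δ P₁ P₂ α₁ α₂} : Typed RT Γ δ P₁ α₁ → Typed RT Γ δ P₂ α₂ →
      Typed RT Γ δ (.par P₁ P₂) .beh

/-- The term `Z = λx. let !x = x in !(x x)`. -/
def Zterm : Tm := .lam 0 (.letB 0 (.var 0) (.bang (.app (.var 0) (.var 0))))

/-- `Zchain n = Z (Z (… (Z !y)…))` with `n` occurrences of `Z` (here `y` is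
the free variable `1`). -/
def Zchain : ℕ → Tm
  | 0 => .bang (.var 1)
  | n + 1 => .app Zterm (Zchain n)

/-- `dup n` is the term `y y ⋯ y` with `2 ^ n` occurrences of `y`. -/
def dup : ℕ → Tm
  | 0 => .var 1
  | n + 1 => .app (dup n) (dup n)

namespace Ctx

def comp : Ctx → Ctx → Ctx
  | hole, E' => E'
  | lam x E, E' => lam x (comp E E')
  | appL E N, E' => appL (comp E E') N
  | appR N E, E' => appR N (comp E E')
  | bang E, E' => bang (comp E E')
  | para E, E' => para (comp E E')
  | letBL x E N, E' => letBL x (comp E E') N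
  | letBR x N E, E' => letBR x N (comp E E')
  | letPL x E N, E' => letPL x (comp E E') N
  | letPR x N E, E' => letPR x N (comp E E')
  | setr r E, E' => setr r (comp E E')
  | store r E, E' => store r (comp E E')
  | parL E N, E' => parL (comp E E') N
  | parR N E, E' => parR N (comp E E')

@[simp]
lemma fill_comp (E E' : Ctx) (M : Tm) : (E.comp E').fill M = E.fill (E'.fill M) := by
  induction E <;> simp [comp, fill, *]

end Ctx

lemma Tm.fo_le_sizeM (x : ℕ) (M : Tm) : M.fo x ≤ M.sizeM := by
  induction M <;> simp only [fo, sizeM] <;> (try split_ifs) <;> omega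

lemma RedAt.step {i : ℕ} {P Q : Tm} (h : RedAt (fun _ => 0) i P Q) : Step P Q :=
  ⟨i, P, Q, .refl P, h, .refl Q⟩

open Relation

lemma Zterm_app_bang_reduces (E : Ctx) (M : Tm) :
    ReflTransGen Step (E.fill (.app Zterm (.bang M))) (E.fill (.bang (.app M M))) := by
  have hβ := (RedAt.beta (R := fun _ => 0) E 0
    (.letB 0 (.var 0) (.bang (.app (.var 0) (.var 0)))) (.bang M)).step
  have hbang := (RedAt.lbang (R := fun _ => 0) E 0 (.bang (.app (.var 0) (.var 0))) M).step
  simp only [Tm.subst, if_true] at hβ hbang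
  exact .tail (.single hβ) hbang

/-- Stated under an arbitrary context because `Step` is not closed under contexts (a `get`
redex needs its store at top level), while the inner `Z`s reduce inside the outer ones. -/
lemma Zchain_reduces (n : ℕ) (E : Ctx) :
    ReflTransGen Step (E.fill (Zchain n)) (E.fill (.bang (dup n))) := by
  induction n generalizing E with
  | zero => exact .refl
  | succ n ih =>
    have hinner := ih (E.comp (.appR Zterm .hole))
    simp only [Ctx.fill_comp, Ctx.fill] at hinner
    exact hinner.trans (Zterm_app_bang_reduces E (dup n))

lemma fo_dup (n : ℕ) : (dup n).fo 1 = 2 ^ n := by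
  induction n with
  | zero => rfl
  | succ n ih => simp only [dup, Tm.fo, ih, pow_succ, mul_two]

/-- Exponential blowup of `Z`: `Z^n(!y)` reduces to `!(y y ⋯ y)` with `2 ^ n`
occurrences of `y`; in particular the size of the normal form is at least
`2 ^ n`. -/
theorem Z_exponential_blowup (n : ℕ) :
    Relation.ReflTransGen Step (Zchain n) (.bang (dup n)) ∧
      Tm.fo 1 (dup n) = 2 ^ n ∧ 2 ^ n ≤ (dup n).sizeM :=
  ⟨Zchain_reduces n .hole, fo_dup n, fo_dup n ▸ (dup n).fo_le_sizeM 1⟩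
end
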